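/- Define q on D by q(x,y) = h(x,y) − S(x,y)·g(L_w^{-1}(x,y)) for (x,y) ∈ D_w. Then q is well-defined on the union of the boundaries ⋃_{w∈Σ} ∂D_w and continuous on D; moreover, if S, g, h are all Lipschitz on D, then q is Lipschitz on D. -/

import Mathlib

open Set

private lemma glue2 {f : ℝ → ℝ} {a b c : ℝ} (hab : a ≤ b) (hbc : b ≤ c)
    (h1 : ContinuousOn f (Icc a b)) (h2 : ContinuousOn f (Icc b c)) :
    ContinuousOn f (Icc a c) := by
  rw [← Icc_union_Icc_eq_Icc hab hbc]
  intro p hp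
  rcases hp with hp | hp
  · refine (h1 p hp).union ?_
    by_cases hm : p ∈ Icc b c
    · exact h2 p hm
    · exact continuousWithinAt_of_notMem_closure (by rwa [isClosed_Icc.closure_eq])
  · refine ContinuousWithinAt.union ?_ (h2 p hp)
    by_cases hm : p ∈ Icc a b
    · exact h1 p hm
    · exact continuousWithinAt_of_notMem_closure (by rwa [isClosed_Icc.closure_eq])

noncomputable def idxF (n : ℕ) (hn : 0 < n) (x : Fin (n + 1) → ℝ) (s : ℝ) : Fin n :=
  if hs : (Finset.univ.filter fun i : Fin n => x i.castSucc ≤ s).Nonempty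
  then (Finset.univ.filter fun i : Fin n => x i.castSucc ≤ s).max' hs
  else ⟨0, hn⟩

lemma idxF_mem (n : ℕ) (hn : 0 < n) (x : Fin (n + 1) → ℝ) {s : ℝ}
    (hs : s ∈ Icc (x 0) (x (Fin.last n))) :
    s ∈ Icc (x (idxF n hn x s).castSucc) (x (idxF n hn x s).succ) := by
  have hne : (Finset.univ.filter fun i : Fin n => x i.castSucc ≤ s).Nonempty := by
    refine ⟨⟨0, hn⟩, ?_⟩
    simp only [Finset.mem_filter, Finset.mem_univ, true_and]
    have h0 : (⟨0, hn⟩ : Fin n).castSucc = (0 : Fin (n + 1)) := by ext; simp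
    rw [h0]; exact hs.1
  rw [idxF, dif_pos hne]
  set m := (Finset.univ.filter fun i : Fin n => x i.castSucc ≤ s).max' hne with hm
  have hmem : m ∈ (Finset.univ.filter fun i : Fin n => x i.castSucc ≤ s) :=
    Finset.max'_mem _ hne
  have hlb : x m.castSucc ≤ s := (Finset.mem_filter.1 hmem).2
  refine ⟨hlb, ?_⟩
  by_contra hub
  push_neg at hub
  by_cases hmn : m.val + 1 < n
  · have hmem2 : (⟨m.val + 1, hmn⟩ : Fin n) ∈
        (Finset.univ.filter fun i : Fin n => x i.castSucc ≤ s) := by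
      simp only [Finset.mem_filter, Finset.mem_univ, true_and]
      have he : (⟨m.val + 1, hmn⟩ : Fin n).castSucc = m.succ := by ext; simp
      rw [he]; exact hub.le
    have hle := Finset.le_max' _ _ hmem2
    rw [← hm] at hle
    exact absurd hle (by simp [Fin.le_def])
  · have hlast : m.succ = Fin.last n := by
      ext; simp only [Fin.val_succ, Fin.val_last]; omega
    rw [hlast] at hub
    exact absurd hs.2 (not_le.2 hub)

lemma oneD (n : ℕ) (hn : 0 < n) (x : Fin (n + 1) → ℝ) (hx : StrictMono x)
    (u uinv : Fin n → ℝ → ℝ)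
    (hu : ∀ i, ∃ a b : ℝ, ∀ t, u i t = a * t + b)
    (hu0 : ∀ i : Fin n, i.val % 2 = 0 →
      u i (x 0) = x i.castSucc ∧ u i (x (Fin.last n)) = x i.succ)
    (hu1 : ∀ i : Fin n, i.val % 2 = 1 →
      u i (x 0) = x i.succ ∧ u i (x (Fin.last n)) = x i.castSucc)
    (huinvc : ∀ i, Continuous (uinv i))
    (huinv : ∀ i, ∀ t ∈ Icc (x 0) (x (Fin.last n)), uinv i (u i t) = t) :
    (∀ i i' : Fin n, ∀ s, s ∈ Icc (x i.castSucc) (x i.succ) →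
        s ∈ Icc (x i'.castSucc) (x i'.succ) → uinv i s = uinv i' s) ∧
    ∃ U : ℝ → ℝ,
      (∀ i : Fin n, ∀ s ∈ Icc (x i.castSucc) (x i.succ), U s = uinv i s) ∧
      ContinuousOn U (Icc (x 0) (x (Fin.last n))) ∧
      (∀ s ∈ Icc (x 0) (x (Fin.last n)), U s ∈ Icc (x 0) (x (Fin.last n))) ∧
      ∃ K : ℝ, 0 < K ∧ ∀ s ∈ Icc (x 0) (x (Fin.last n)), ∀ s' ∈ Icc (x 0) (x (Fin.last n)),
        |U s - U s'| ≤ K * |s - s'| := by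
  have hx0l : x 0 ≤ x (Fin.last n) := hx.monotone (Fin.zero_le _)
  have hx0l' : x 0 < x (Fin.last n) := hx (by simp [Fin.lt_def]; omega)
  have hmem0 : x 0 ∈ Icc (x 0) (x (Fin.last n)) := ⟨le_refl _, hx0l⟩
  have hmeml : x (Fin.last n) ∈ Icc (x 0) (x (Fin.last n)) := ⟨hx0l, le_refl _⟩
  have hcell : ∀ i : Fin n, x i.castSucc < x i.succ := fun i => hx (by simp [Fin.lt_def])
  have hsub : ∀ i : Fin n, Icc (x i.castSucc) (x i.succ) ⊆ Icc (x 0) (x (Fin.last n)) :=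
    fun i => Icc_subset_Icc (hx.monotone (Fin.zero_le _))
      (hx.monotone (by simp [Fin.le_def]))
  -- well-definedness
  have key : ∀ i i' : Fin n, i'.val = i.val + 1 →
      uinv i (x i.succ) = uinv i' (x i.succ) := by
    intro i i' hii'
    have hcs : x i'.castSucc = x i.succ := by congr 1; ext; simp [hii']
    rcases Nat.mod_two_eq_zero_or_one i.val with hp | hp
    · have h1 := (hu0 i hp).2
      have hp' : i'.val % 2 = 1 := by omega
      have h2 := (hu1 i' hp').2
      calc uinv i (x i.succ) = x (Fin.last n) := by rw [← h1, huinv i _ hmeml]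
        _ = uinv i' (x i.succ) := by rw [← hcs, ← h2, huinv i' _ hmeml]
    · have h1 := (hu1 i hp).1
      have hp' : i'.val % 2 = 0 := by omega
      have h2 := (hu0 i' hp').1
      calc uinv i (x i.succ) = x 0 := by rw [← h1, huinv i _ hmem0]
        _ = uinv i' (x i.succ) := by rw [← hcs, ← h2, huinv i' _ hmem0]
  have main : ∀ i i' : Fin n, i.val ≤ i'.val → ∀ s,
      s ∈ Icc (x i.castSucc) (x i.succ) → s ∈ Icc (x i'.castSucc) (x i'.succ) →
      uinv i s = uinv i' s := by
    intro i i' hle s hs hs'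
    rcases eq_or_lt_of_le hle with heq | hlt
    · have : i = i' := Fin.ext heq
      rw [this]
    · by_cases hadj : i'.val = i.val + 1
      · have hcs : x i'.castSucc = x i.succ := by congr 1; ext; simp [hadj]
        have hseq : s = x i.succ := le_antisymm hs.2 (by rw [← hcs]; exact hs'.1)
        rw [hseq]; exact key i i' hadj
      · exfalso
        have h2 : x i.succ < x i'.castSucc := hx (by simp [Fin.lt_def]; omega)
        have := hs.2; have := hs'.1; linarith
  have wd : ∀ i i' : Fin n, ∀ s, s ∈ Icc (x i.castSucc) (x i.succ) →
      s ∈ Icc (x i'.castSucc) (x i'.succ) → uinv i s = uinv i' s := by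
    intro i i' s hs hs'
    rcases le_total i.val i'.val with hle | hle
    · exact main i i' hle s hs hs'
    · exact (main i' i hle s hs' hs).symm
  refine ⟨wd, ?_⟩
  -- surjectivity onto cells
  have usurj : ∀ i : Fin n, ∀ s ∈ Icc (x i.castSucc) (x i.succ),
      uinv i s ∈ Icc (x 0) (x (Fin.last n)) ∧ u i (uinv i s) = s := by
    intro i s hs
    have hcont : Continuous (u i) := by
      obtain ⟨a, b, hab⟩ := hu i
      have : u i = fun t => a * t + b := funext hab
      rw [this]; continuity
    rcases Nat.mod_two_eq_zero_or_one i.val with hp | hp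
    · obtain ⟨h0, hl⟩ := hu0 i hp
      have himg := intermediate_value_Icc hx0l hcont.continuousOn
      rw [h0, hl] at himg
      obtain ⟨t, ht, hts⟩ := himg hs
      have he : uinv i s = t := by rw [← hts, huinv i t ht]
      exact ⟨he ▸ ht, by rw [he, hts]⟩
    · obtain ⟨h0, hl⟩ := hu1 i hp
      have himg := intermediate_value_Icc' hx0l hcont.continuousOn
      rw [h0, hl] at himg
      obtain ⟨t, ht, hts⟩ := himg hs
      have he : uinv i s = t := by rw [← hts, huinv i t ht]
      exact ⟨he ▸ ht, by rw [he, hts]⟩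
  -- per-cell Lipschitz bound
  set L := x (Fin.last n) - x 0 with hLdef
  have hLpos : 0 < L := sub_pos.2 hx0l'
  have ulip : ∀ i : Fin n, ∀ s ∈ Icc (x i.castSucc) (x i.succ),
      ∀ s' ∈ Icc (x i.castSucc) (x i.succ),
      |uinv i s - uinv i s'| ≤ (L / (x i.succ - x i.castSucc)) * |s - s'| := by
    intro i s hs s' hs'
    obtain ⟨a, b, hab⟩ := hu i
    obtain ⟨ht, hts⟩ := usurj i s hs
    obtain ⟨ht', hts'⟩ := usurj i s' hs'
    have hd : 0 < x i.succ - x i.castSucc := sub_pos.2 (hcell i)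
    have e1 : s = a * uinv i s + b := by conv_lhs => rw [← hts, hab]
    have e2 : s' = a * uinv i s' + b := by conv_lhs => rw [← hts', hab]
    have hdiff : s - s' = a * (uinv i s - uinv i s') := by linear_combination e1 - e2
    have haL : |a| * L = x i.succ - x i.castSucc := by
      have hEq : u i (x (Fin.last n)) - u i (x 0) = a * L := by
        rw [hab, hab, hLdef]; ring
      rcases Nat.mod_two_eq_zero_or_one i.val with hp | hp
      · obtain ⟨h0, hl⟩ := hu0 i hp
        rw [h0, hl] at hEq
        have : |a * L| = x i.succ - x i.castSucc := by rw [← hEq]; exact abs_of_pos hd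
        rwa [abs_mul, abs_of_pos hLpos] at this
      · obtain ⟨h0, hl⟩ := hu1 i hp
        rw [h0, hl] at hEq
        have : |a * L| = x i.succ - x i.castSucc := by
          rw [← hEq]  -- goal |x i.castSucc - x i.succ| = ...
          rw [abs_of_neg (by linarith)]; ring
        rwa [abs_mul, abs_of_pos hLpos] at this
    have ha : (0:ℝ) < |a| := by
      rcases abs_nonneg a |>.lt_or_eq with h | h
      · exact h
      · exfalso; rw [← h] at haL; simp at haL; linarith
    have h1 : |s - s'| = |a| * |uinv i s - uinv i s'| := by rw [hdiff, abs_mul]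
    rw [h1, ← haL]
    apply le_of_eq
    field_simp
  -- the glued function
  refine ⟨fun s => uinv (idxF n hn x s) s, ?_, ?_, ?_, ?_⟩
  case _ =>
    intro i s hs
    exact wd (idxF n hn x s) i s (idxF_mem n hn x (hsub i hs)) hs
  case _ =>
    have claim : ∀ k : Fin (n + 1), ContinuousOn (fun s => uinv (idxF n hn x s) s)
        (Icc (x 0) (x k)) := by
      intro k
      induction k using Fin.induction with
      | zero => rw [Icc_self]; exact continuousOn_singleton _ _
      | succ i ih =>
        have h1 : ContinuousOn (fun s => uinv (idxF n hn x s) s)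
            (Icc (x i.castSucc) (x i.succ)) :=
          ((huinvc i).continuousOn).congr
            (fun s hs => wd (idxF n hn x s) i s (idxF_mem n hn x (hsub i hs)) hs)
        exact glue2 (hx.monotone (Fin.zero_le _))
          (hx.monotone (by simp [Fin.le_def])) ih h1
    exact claim (Fin.last n)
  case _ =>
    intro s hs
    exact (usurj _ s (idxF_mem n hn x hs)).1
  case _ =>
    have hFinNE : (Finset.univ : Finset (Fin n)).Nonempty := ⟨⟨0, hn⟩, Finset.mem_univ _⟩
    set δ := Finset.univ.inf' hFinNE (fun i : Fin n => x i.succ - x i.castSucc) with hδdef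
    have hδpos : 0 < δ := by
      rw [hδdef, Finset.lt_inf'_iff]
      intro i _
      exact sub_pos.2 (hcell i)
    have hδle : ∀ i : Fin n, δ ≤ x i.succ - x i.castSucc :=
      fun i => Finset.inf'_le _ (Finset.mem_univ i)
    refine ⟨L / δ, div_pos hLpos hδpos, ?_⟩
    have hK : (0:ℝ) < L / δ := div_pos hLpos hδpos
    have cellK : ∀ i : Fin n, ∀ s ∈ Icc (x i.castSucc) (x i.succ),
        ∀ s' ∈ Icc (x i.castSucc) (x i.succ),
        |uinv i s - uinv i s'| ≤ (L / δ) * |s - s'| := by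
      intro i s hs s' hs'
      refine (ulip i s hs s' hs').trans ?_
      have : L / (x i.succ - x i.castSucc) ≤ L / δ := by
        apply div_le_div_of_nonneg_left hLpos.le hδpos (hδle i)
      exact mul_le_mul_of_nonneg_right this (abs_nonneg _)
    have Ueq : ∀ i : Fin n, ∀ s ∈ Icc (x i.castSucc) (x i.succ),
        (fun s => uinv (idxF n hn x s) s) s = uinv i s :=
      fun i s hs => wd (idxF n hn x s) i s (idxF_mem n hn x (hsub i hs)) hs
    have claim : ∀ k : Fin (n + 1), ∀ s ∈ Icc (x 0) (x k), ∀ s' ∈ Icc (x 0) (x k),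
        |(fun s => uinv (idxF n hn x s) s) s - (fun s => uinv (idxF n hn x s) s) s'|
          ≤ (L / δ) * |s - s'| := by
      intro k
      induction k using Fin.induction with
      | zero =>
        intro s hs s' hs'
        rw [Icc_self, mem_singleton_iff] at hs hs'
        subst hs; subst hs'; simp
      | succ i ih =>
        intro s hs s' hs'
        have hb0 : x 0 ≤ x i.castSucc := hx.monotone (Fin.zero_le _)
        have hmid : x i.castSucc ∈ Icc (x i.castSucc) (x i.succ) :=
          ⟨le_refl _, (hcell i).le⟩
        by_cases h1 : s ≤ x i.castSucc <;> by_cases h2 : s' ≤ x i.castSucc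
        · exact ih s ⟨hs.1, h1⟩ s' ⟨hs'.1, h2⟩
        · push_neg at h2
          have e1 := ih s ⟨hs.1, h1⟩ (x i.castSucc) ⟨hb0, le_refl _⟩
          have hs'c : s' ∈ Icc (x i.castSucc) (x i.succ) := ⟨h2.le, hs'.2⟩
          have e2 : |(fun s => uinv (idxF n hn x s) s) (x i.castSucc)
              - (fun s => uinv (idxF n hn x s) s) s'| ≤ (L / δ) * |x i.castSucc - s'| := by
            rw [Ueq i _ hmid, Ueq i _ hs'c]
            exact cellK i _ hmid _ hs'c
          have t1 := abs_sub_le ((fun s => uinv (idxF n hn x s) s) s)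
            ((fun s => uinv (idxF n hn x s) s) (x i.castSucc))
            ((fun s => uinv (idxF n hn x s) s) s')
          have t2 : |s - x i.castSucc| + |x i.castSucc - s'| = |s - s'| := by
            rw [abs_of_nonpos (by linarith), abs_of_nonpos (by linarith),
              abs_of_nonpos (by linarith)]
            ring
          have t3 : (L / δ) * |s - x i.castSucc| + (L / δ) * |x i.castSucc - s'|
              = (L / δ) * |s - s'| := by rw [← t2]; ring
          linarith [e1, e2, t1, t3]
        · push_neg at h1
          have e1 := ih s' ⟨hs'.1, h2⟩ (x i.castSucc) ⟨hb0, le_refl _⟩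
          have hsc : s ∈ Icc (x i.castSucc) (x i.succ) := ⟨h1.le, hs.2⟩
          have e2 : |(fun s => uinv (idxF n hn x s) s) (x i.castSucc)
              - (fun s => uinv (idxF n hn x s) s) s| ≤ (L / δ) * |x i.castSucc - s| := by
            rw [Ueq i _ hmid, Ueq i _ hsc]
            exact cellK i _ hmid _ hsc
          have t1 := abs_sub_le ((fun s => uinv (idxF n hn x s) s) s')
            ((fun s => uinv (idxF n hn x s) s) (x i.castSucc))
            ((fun s => uinv (idxF n hn x s) s) s)
          have t2 : |s' - x i.castSucc| + |x i.castSucc - s| = |s - s'| := by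
            rw [abs_of_nonpos (by linarith), abs_of_nonpos (by linarith),
              abs_of_nonneg (by linarith)]
            ring
          have t3 : (L / δ) * |s' - x i.castSucc| + (L / δ) * |x i.castSucc - s|
              = (L / δ) * |s - s'| := by rw [← t2]; ring
          have t4 : |(fun s => uinv (idxF n hn x s) s) s
              - (fun s => uinv (idxF n hn x s) s) s'|
              = |(fun s => uinv (idxF n hn x s) s) s'
              - (fun s => uinv (idxF n hn x s) s) s| := abs_sub_comm _ _
          linarith [e1, e2, t1, t3]
        · push_neg at h1 h2
          have hsc : s ∈ Icc (x i.castSucc) (x i.succ) := ⟨h1.le, hs.2⟩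
          have hs'c : s' ∈ Icc (x i.castSucc) (x i.succ) := ⟨h2.le, hs'.2⟩
          rw [Ueq i _ hsc, Ueq i _ hs'c]
          exact cellK i _ hsc _ hs'c
    exact claim (Fin.last n)


/-- the function q(x,y) = h(x,y) − S(x,y)·g(L_w^{-1}(x,y)) on D_w is
well-defined on overlaps of cells, extends to a continuous function on D, and is
Lipschitz on D whenever S, g, h are Lipschitz on D. -/
theorem q_well_defined_continuous_lipschitz (N M : ℕ) (hN : 2 ≤ N) (hM : 2 ≤ M)
    (x : Fin (N + 1) → ℝ) (y : Fin (M + 1) → ℝ) (hx : StrictMono x) (hy : StrictMono y)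
    (z : Fin (N + 1) → Fin (M + 1) → ℝ)
    (u : Fin N → ℝ → ℝ) (v : Fin M → ℝ → ℝ)
    (hu : ∀ i, ∃ a b : ℝ, ∀ t, u i t = a * t + b)
    (hv : ∀ j, ∃ a b : ℝ, ∀ t, v j t = a * t + b)
    (hu0 : ∀ i : Fin N, i.val % 2 = 0 →
      u i (x 0) = x i.castSucc ∧ u i (x (Fin.last N)) = x i.succ)
    (hu1 : ∀ i : Fin N, i.val % 2 = 1 →
      u i (x 0) = x i.succ ∧ u i (x (Fin.last N)) = x i.castSucc)
    (hv0 : ∀ j : Fin M, j.val % 2 = 0 →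
      v j (y 0) = y j.castSucc ∧ v j (y (Fin.last M)) = y j.succ)
    (hv1 : ∀ j : Fin M, j.val % 2 = 1 →
      v j (y 0) = y j.succ ∧ v j (y (Fin.last M)) = y j.castSucc)
    (uinv : Fin N → ℝ → ℝ) (vinv : Fin M → ℝ → ℝ)
    (huinvc : ∀ i, Continuous (uinv i)) (hvinvc : ∀ j, Continuous (vinv j))
    (huinv : ∀ i, ∀ t ∈ Set.Icc (x 0) (x (Fin.last N)), uinv i (u i t) = t)
    (hvinv : ∀ j, ∀ t ∈ Set.Icc (y 0) (y (Fin.last M)), vinv j (v j t) = t)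
    (D : Set (ℝ × ℝ))
    (hD : D = Set.Icc (x 0) (x (Fin.last N)) ×ˢ Set.Icc (y 0) (y (Fin.last M)))
    (Dcell : Fin N × Fin M → Set (ℝ × ℝ))
    (hDcell : ∀ w : Fin N × Fin M,
      Dcell w = Set.Icc (x w.1.castSucc) (x w.1.succ) ×ˢ Set.Icc (y w.2.castSucc) (y w.2.succ))
    (S g h : ℝ × ℝ → ℝ)
    (hS : ContinuousOn S D) (hS1 : ∀ t ∈ D, |S t| < 1)
    (hg : ContinuousOn g D)
    (hgc : ∀ i : Fin (N + 1), ∀ j : Fin (M + 1),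
      (i = 0 ∨ i = Fin.last N) → (j = 0 ∨ j = Fin.last M) → g (x i, y j) = z i j)
    (hh : ContinuousOn h D)
    (hhc : ∀ i j, h (x i, y j) = z i j) :
    (∀ w w' : Fin N × Fin M, ∀ t : ℝ × ℝ, t ∈ Dcell w → t ∈ Dcell w' →
      h t - S t * g (uinv w.1 t.1, vinv w.2 t.2)
        = h t - S t * g (uinv w'.1 t.1, vinv w'.2 t.2)) ∧
    ∃ q : ℝ × ℝ → ℝ,
      (∀ w : Fin N × Fin M, ∀ t ∈ Dcell w,
        q t = h t - S t * g (uinv w.1 t.1, vinv w.2 t.2)) ∧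
      ContinuousOn q D ∧
      ((∃ lS : ℝ, 0 < lS ∧ ∀ t₁ ∈ D, ∀ t₂ ∈ D, |S t₁ - S t₂| ≤ lS * dist t₁ t₂) →
       (∃ lg : ℝ, 0 < lg ∧ ∀ t₁ ∈ D, ∀ t₂ ∈ D, |g t₁ - g t₂| ≤ lg * dist t₁ t₂) →
       (∃ lh : ℝ, 0 < lh ∧ ∀ t₁ ∈ D, ∀ t₂ ∈ D, |h t₁ - h t₂| ≤ lh * dist t₁ t₂) →
       ∃ lq : ℝ, 0 < lq ∧ ∀ t₁ ∈ D, ∀ t₂ ∈ D, |q t₁ - q t₂| ≤ lq * dist t₁ t₂) := by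
  obtain ⟨wdx, Ux, hUxcell, hUxcont, hUxmaps, Kx, hKx, hUxlip⟩ :=
    oneD N (by omega) x hx u uinv hu hu0 hu1 huinvc huinv
  obtain ⟨wdy, Vy, hVycell, hVycont, hVymaps, Ky, hKy, hVylip⟩ :=
    oneD M (by omega) y hy v vinv hv hv0 hv1 hvinvc hvinv
  constructor
  · intro w w' t ht ht'
    rw [hDcell] at ht ht'
    rw [wdx w.1 w'.1 t.1 ht.1 ht'.1, wdy w.2 w'.2 t.2 ht.2 ht'.2]
  have hmap : ∀ t ∈ D, (Ux t.1, Vy t.2) ∈ D := by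
    intro t ht
    rw [hD] at ht ⊢
    exact ⟨hUxmaps t.1 ht.1, hVymaps t.2 ht.2⟩
  refine ⟨fun t => h t - S t * g (Ux t.1, Vy t.2), ?_, ?_, ?_⟩
  · intro w t ht
    rw [hDcell] at ht
    show h t - S t * g (Ux t.1, Vy t.2) = _
    rw [hUxcell w.1 t.1 ht.1, hVycell w.2 t.2 ht.2]
  · have hUV : ContinuousOn (fun t : ℝ × ℝ => (Ux t.1, Vy t.2)) D := by
      rw [hD]
      exact (hUxcont.comp continuous_fst.continuousOn fun t ht => ht.1).prodMk
        (hVycont.comp continuous_snd.continuousOn fun t ht => ht.2)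
    exact hh.sub (hS.mul (hg.comp hUV fun t ht => hmap t ht))
  · rintro ⟨lS, hlS, hlipS⟩ ⟨lg, hlg, hlipg⟩ ⟨lh, hlh, hliph⟩
    have hDcomp : IsCompact D := by
      rw [hD]; exact isCompact_Icc.prod isCompact_Icc
    obtain ⟨B, hB⟩ := hDcomp.exists_bound_of_continuousOn hg
    set B' := max B 0 with hB'def
    have hB'0 : (0:ℝ) ≤ B' := le_max_right _ _
    have hgB : ∀ p ∈ D, |g p| ≤ B' := fun p hp =>
      le_trans (by simpa [Real.norm_eq_abs] using hB p hp) (le_max_left _ _)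
    set Km := max Kx Ky with hKmdef
    have hKm0 : (0:ℝ) ≤ Km := le_trans hKx.le (le_max_left _ _)
    refine ⟨lh + lg * Km + B' * lS, by positivity, ?_⟩
    intro t1 ht1 t2 ht2
    have hP1 : (Ux t1.1, Vy t1.2) ∈ D := hmap t1 ht1
    have hP2 : (Ux t2.1, Vy t2.2) ∈ D := hmap t2 ht2
    have ht1' := ht1; have ht2' := ht2
    rw [hD] at ht1' ht2'
    have hd1 : dist t1.1 t2.1 ≤ dist t1 t2 := by
      rw [Prod.dist_eq]; exact le_max_left _ _
    have hd2 : dist t1.2 t2.2 ≤ dist t1 t2 := by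
      rw [Prod.dist_eq]; exact le_max_right _ _
    have hUd : |Ux t1.1 - Ux t2.1| ≤ Kx * dist t1 t2 := by
      refine (hUxlip t1.1 ht1'.1 t2.1 ht2'.1).trans ?_
      rw [← Real.dist_eq]
      exact mul_le_mul_of_nonneg_left hd1 hKx.le
    have hVd : |Vy t1.2 - Vy t2.2| ≤ Ky * dist t1 t2 := by
      refine (hVylip t1.2 ht1'.2 t2.2 ht2'.2).trans ?_
      rw [← Real.dist_eq]
      exact mul_le_mul_of_nonneg_left hd2 hKy.le
    have hPd : dist ((Ux t1.1, Vy t1.2) : ℝ × ℝ) (Ux t2.1, Vy t2.2) ≤ Km * dist t1 t2 := by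
      rw [Prod.dist_eq]
      apply max_le
      · calc dist (Ux t1.1) (Ux t2.1) = |Ux t1.1 - Ux t2.1| := Real.dist_eq _ _
          _ ≤ Kx * dist t1 t2 := hUd
          _ ≤ Km * dist t1 t2 :=
            mul_le_mul_of_nonneg_right (le_max_left _ _) dist_nonneg
      · calc dist (Vy t1.2) (Vy t2.2) = |Vy t1.2 - Vy t2.2| := Real.dist_eq _ _
          _ ≤ Ky * dist t1 t2 := hVd
          _ ≤ Km * dist t1 t2 :=
            mul_le_mul_of_nonneg_right (le_max_right _ _) dist_nonneg
    have hgd : |g (Ux t1.1, Vy t1.2) - g (Ux t2.1, Vy t2.2)| ≤ lg * (Km * dist t1 t2) :=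
      le_trans (hlipg _ hP1 _ hP2) (mul_le_mul_of_nonneg_left hPd hlg.le)
    have hSb : |S t1| ≤ 1 := (hS1 t1 ht1).le
    have hgb2 : |g (Ux t2.1, Vy t2.2)| ≤ B' := hgB _ hP2
    have hSd := hlipS t1 ht1 t2 ht2
    have hhd := hliph t1 ht1 t2 ht2
    have m1 : |S t1| * |g (Ux t1.1, Vy t1.2) - g (Ux t2.1, Vy t2.2)|
        ≤ 1 * (lg * (Km * dist t1 t2)) :=
      mul_le_mul hSb hgd (abs_nonneg _) zero_le_one
    have m2 : |g (Ux t2.1, Vy t2.2)| * |S t1 - S t2| ≤ B' * (lS * dist t1 t2) :=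
      mul_le_mul hgb2 hSd (abs_nonneg _) hB'0
    have rhs : (lh + lg * Km + B' * lS) * dist t1 t2
        = lh * dist t1 t2 + 1 * (lg * (Km * dist t1 t2)) + B' * (lS * dist t1 t2) := by
      ring
    show |(h t1 - S t1 * g (Ux t1.1, Vy t1.2)) - (h t2 - S t2 * g (Ux t2.1, Vy t2.2))| ≤ _
    calc |(h t1 - S t1 * g (Ux t1.1, Vy t1.2)) - (h t2 - S t2 * g (Ux t2.1, Vy t2.2))|
        = |(h t1 - h t2) - (S t1 * (g (Ux t1.1, Vy t1.2) - g (Ux t2.1, Vy t2.2))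
            + g (Ux t2.1, Vy t2.2) * (S t1 - S t2))| := by ring_nf
      _ ≤ |h t1 - h t2| + |S t1 * (g (Ux t1.1, Vy t1.2) - g (Ux t2.1, Vy t2.2))
            + g (Ux t2.1, Vy t2.2) * (S t1 - S t2)| := abs_sub _ _
      _ ≤ |h t1 - h t2| + (|S t1 * (g (Ux t1.1, Vy t1.2) - g (Ux t2.1, Vy t2.2))|
            + |g (Ux t2.1, Vy t2.2) * (S t1 - S t2)|) :=
          add_le_add_right (abs_add_le _ _) _
      _ = |h t1 - h t2| + (|S t1| * |g (Ux t1.1, Vy t1.2) - g (Ux t2.1, Vy t2.2)|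
            + |g (Ux t2.1, Vy t2.2)| * |S t1 - S t2|) := by rw [abs_mul, abs_mul]
      _ ≤ (lh + lg * Km + B' * lS) * dist t1 t2 := by
          rw [rhs]; linarith [hhd, m1, m2]
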